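/- For all integers n, m, i with 0 ≤ i ≤ m ≤ n, the following binomial identity holds: ∑_{r=i}^{n+m} (-1)^r (m+n+1-r) · C(n+2, r+1-i) · C(m+n-r, n-r+i) = (-1)^i (n+m+2-i) · C(m+n+1-i, n+1), where C(a,b) denotes the binomial coefficient with the convention C(a,b) = 0 whenever b < 0 or b > a. -/

import Mathlib

/-!
Reflecting the summation index, `r = n + i - k`, and absorbing the linear factor into the binomial
coefficients turns the sum into `-(-1)^i (n+2)` times
`∑_{k ≤ n} (-1)^(n+1-k) C(n+1,k) C(m-i+1+k, m-i)`.
Completed by its term `k = n+1`, this is the `(n+1)`-st forward difference of the polynomial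
`x ↦ C(x, m-i)`, of degree `m - i ≤ n`, hence zero; so the sum equals the missing boundary term.
-/

open Finset

/-- The binomial coefficient `C(a,b)` for integers, with the convention that
`C(a,b) = 0` whenever `b < 0` or `b > a`. -/
def intChoose (a b : ℤ) : ℤ :=
  if 0 ≤ b ∧ b ≤ a then (a.toNat.choose b.toNat : ℤ) else 0

open fwdDiff

lemma intChoose_natCast (a b : ℕ) : intChoose a b = a.choose b := by
  unfold intChoose
  split_ifs with h
  · simp
  · rw [Nat.choose_eq_zero_of_lt (by omega), Nat.cast_zero]

lemma intChoose_of_neg (a : ℤ) {b : ℤ} (hb : b < 0) : intChoose a b = 0 :=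
  if_neg (by omega)

lemma fwdDiff_iter_choose_eq_zero {j N : ℕ} (h : j < N) :
    (Δ_[1])^[N] (fun x ↦ x.choose j : ℕ → ℤ) = 0 := by
  obtain ⟨e, rfl⟩ := Nat.exists_eq_add_of_lt h
  have hΔconst : Δ_[1] (fun _ ↦ 0 : ℕ → ℤ) = fun _ ↦ 0 := fwdDiff_const 1 0
  have hΔchoose := fwdDiff_iter_choose 0 j
  rw [add_zero] at hΔchoose
  rw [show j + e + 1 = e + 1 + j by ring, Function.iterate_add_apply, hΔchoose,
    Function.iterate_succ_apply]
  simp only [Nat.choose_zero_right, Nat.cast_one, fwdDiff_const]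
  exact Function.iterate_fixed hΔconst e

lemma sum_range_neg_one_pow_mul_choose_mul_choose_add_eq_zero {j N : ℕ} (h : j < N) (y : ℕ) :
    ∑ k ∈ range (N + 1), (-1 : ℤ) ^ (N - k) * N.choose k * (y + k).choose j = 0 := by
  have := congrFun (fwdDiff_iter_choose_eq_zero h) y
  rw [fwdDiff_iter_eq_sum_shift] at this
  simpa only [smul_eq_mul, mul_one, Nat.cast_add, Pi.zero_apply] using this

lemma sum_range_neg_one_pow_mul_choose_mul_choose_add {j N : ℕ} (h : j ≤ N) (y : ℕ) :
    ∑ k ∈ range (N + 1), (-1 : ℤ) ^ (N + 1 - k) * (N + 1).choose k * (y + k).choose j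
      = -(y + (N + 1)).choose j := by
  have h₀ := sum_range_neg_one_pow_mul_choose_mul_choose_add_eq_zero (Nat.lt_succ_of_le h) y
  rw [sum_range_succ, Nat.sub_self, pow_zero, Nat.choose_self, Nat.cast_one, one_mul,
    one_mul] at h₀
  exact eq_neg_of_add_eq_zero_left h₀

lemma add_succ_mul_choose_succ_mul_choose (N a k : ℕ) :
    (a + k + 1) * (N + 1).choose (k + 1) * (a + k).choose k
      = (N + 1) * N.choose k * (a + k + 1).choose (k + 1) := by
  have h₁ := Nat.add_one_mul_choose_eq (a + k) k
  have h₂ := Nat.add_one_mul_choose_eq N k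
  apply Nat.eq_of_mul_eq_mul_right k.succ_pos
  calc (a + k + 1) * (N + 1).choose (k + 1) * (a + k).choose k * (k + 1)
      = ((a + k + 1) * (a + k).choose k) * ((N + 1).choose (k + 1) * (k + 1)) := by ring
    _ = (a + k + 1).choose (k + 1) * (k + 1) * ((N + 1) * N.choose k) := by rw [h₁, h₂]
    _ = (N + 1) * N.choose k * (a + k + 1).choose (k + 1) * (k + 1) := by ring

def masterSummand (n m i r : ℕ) : ℤ :=
  (-1 : ℤ) ^ r * ((m : ℤ) + n + 1 - r) * intChoose ((n : ℤ) + 2) ((r : ℤ) + 1 - i) *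
    intChoose ((m : ℤ) + n - r) ((n : ℤ) - r + i)

lemma masterSummand_eq_zero_of_lt {n m i r : ℕ} (hr : n + i < r) : masterSummand n m i r = 0 := by
  rw [masterSummand, intChoose_of_neg ((m : ℤ) + n - r) (by omega), mul_zero]

lemma sum_Icc_masterSummand_eq_sum_range {n m i : ℕ} (hi : i ≤ m) :
    ∑ r ∈ Icc i (n + m), masterSummand n m i r
      = ∑ k ∈ range (n + 1), masterSummand n m i (n + i - k) := by
  have htail : ∑ r ∈ Icc i (n + i), masterSummand n m i r
      = ∑ r ∈ Icc i (n + m), masterSummand n m i r := by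
    refine sum_subset (Icc_subset_Icc_right (by omega)) fun r hr hr' ↦ ?_
    simp only [mem_Icc, not_and, not_le] at hr hr'
    exact masterSummand_eq_zero_of_lt (hr' hr.1)
  rw [← htail]
  refine sum_nbij' (fun r ↦ n + i - r) (fun k ↦ n + i - k) ?_ ?_ ?_ ?_ ?_ <;>
    intro r hr <;> simp only [mem_Icc, mem_range] at hr ⊢
  any_goals omega
  rw [show n + i - (n + i - r) = r by omega]

lemma masterSummand_reflect {n m i k : ℕ} (hi : i ≤ m) (hk : k ≤ n) :
    masterSummand n m i (n + i - k) = -((-1 : ℤ) ^ i * (n + 2)) *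
      ((-1 : ℤ) ^ (n + 1 - k) * (n + 1).choose k * (m - i + 1 + k).choose (m - i)) := by
  obtain ⟨a, rfl⟩ := Nat.exists_eq_add_of_le hi
  have hsign : (-1 : ℤ) ^ (n + i - k) = -((-1) ^ i * (-1) ^ (n + 1 - k)) := by
    rw [← pow_add, show i + (n + 1 - k) = n + i - k + 1 by omega, pow_succ]
    ring
  have hchoose := add_succ_mul_choose_succ_mul_choose (n + 1) a k
  rw [← Nat.choose_symm_of_eq_add (show n + 1 + 1 = (n + 1 - k) + (k + 1) by omega),
    Nat.choose_symm_of_eq_add (show a + k + 1 = (k + 1) + a by omega)] at hchoose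
  rw [masterSummand, hsign, show ((n : ℤ) + 2) = ((n + 1 + 1 : ℕ) : ℤ) by push_cast; ring,
    show ((n + i - k : ℕ) : ℤ) + 1 - i = ((n + 1 - k : ℕ) : ℤ) by omega,
    show ((i + a : ℕ) : ℤ) + n - (n + i - k : ℕ) = ((a + k : ℕ) : ℤ) by omega,
    show (n : ℤ) - (n + i - k : ℕ) + i = (k : ℕ) by omega,
    show ((i + a : ℕ) : ℤ) + n + 1 - (n + i - k : ℕ) = ((a + k + 1 : ℕ) : ℤ) by omega,
    intChoose_natCast, intChoose_natCast, Nat.add_sub_cancel_left,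
    show a + 1 + k = a + k + 1 by ring]
  have := congrArg (Nat.cast : ℕ → ℤ) hchoose
  push_cast at this ⊢
  linear_combination (-(-1 : ℤ) ^ i * (-1) ^ (n + 1 - k)) * this

/-- **The master binomial identity.** For all integers `0 ≤ i ≤ m ≤ n`:
`∑_{r=i}^{n+m} (-1)^r (m+n+1-r)·C(n+2, r+1-i)·C(m+n-r, n-r+i)
  = (-1)^i (n+m+2-i)·C(m+n+1-i, n+1)`. -/
theorem master_binomial_identity (n m i : ℕ) (hi : i ≤ m) (hmn : m ≤ n) :
    ∑ r ∈ Finset.Icc i (n + m),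
      (-1 : ℤ) ^ r * ((m : ℤ) + n + 1 - r) * intChoose ((n : ℤ) + 2) ((r : ℤ) + 1 - i) *
        intChoose ((m : ℤ) + n - r) ((n : ℤ) - r + i)
      = (-1 : ℤ) ^ i * ((n : ℤ) + m + 2 - i) * intChoose ((m : ℤ) + n + 1 - i) ((n : ℤ) + 1) := by
  have hcoeff : (n + 2) * (m - i + 1 + (n + 1)).choose (m - i)
      = (n + m + 2 - i) * (n + m + 1 - i).choose (n + 1) := by
    rw [Nat.choose_symm_of_eq_add (show m - i + 1 + (n + 1) = m - i + (n + 2) by ring),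
      show m - i + 1 + (n + 1) = n + m + 1 - i + 1 by omega,
      show n + m + 2 - i = n + m + 1 - i + 1 by omega, Nat.add_one_mul_choose_eq, mul_comm]
  change ∑ r ∈ Icc i (n + m), masterSummand n m i r = _
  rw [sum_Icc_masterSummand_eq_sum_range hi,
    sum_congr rfl fun k hk ↦ masterSummand_reflect hi (Nat.le_of_lt_succ (mem_range.mp hk)),
    ← mul_sum, sum_range_neg_one_pow_mul_choose_mul_choose_add (by omega),
    show (m : ℤ) + n + 1 - i = ((n + m + 1 - i : ℕ) : ℤ) by omega,
    show (n : ℤ) + m + 2 - i = ((n + m + 2 - i : ℕ) : ℤ) by omega,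
    show (n : ℤ) + 1 = ((n + 1 : ℕ) : ℤ) by push_cast; ring, intChoose_natCast]
  have := congrArg (Nat.cast : ℕ → ℤ) hcoeff
  push_cast at this ⊢
  linear_combination (-1 : ℤ) ^ i * this
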